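/- If T is a tree on n vertices and v ∈ V(T), then the number of connected sets of T containing v is at most 2^{n−1}, with equality if and only if T is the star S_n with center v. -/
import Mathlib


open SimpleGraph

/-- Number of connected sets (nonempty vertex subsets inducing a connected subgraph). -/
noncomputable def numConnSets {V : Type*} [Fintype V] (G : SimpleGraph V) : ℕ :=
  Nat.card {s : Finset V // (G.induce (↑s : Set V)).Connected}

/-- Number of connected sets containing the vertex `v`. -/
noncomputable def numConnSetsAt {V : Type*} [Fintype V] (G : SimpleGraph V) (v : V) : ℕ :=
  Nat.card {s : Finset V // v ∈ s ∧ (G.induce (↑s : Set V)).Connected}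

/-- A graph is bicyclic if it is connected and has one more edge than vertices. -/
def Bicyclic {V : Type*} [Fintype V] (G : SimpleGraph V) : Prop :=
  G.Connected ∧ Nat.card G.edgeSet = Fintype.card V + 1

/-- The tadpole graph `D_m`: a triangle on vertices `0,1,2` with the path
`2,3,…,m-1` attached. -/
def tadpoleGraph (m : ℕ) : SimpleGraph (Fin m) :=
  SimpleGraph.fromRel (fun i j =>
    ((i : ℕ) = 0 ∧ (j : ℕ) = 1) ∨ ((i : ℕ) = 0 ∧ (j : ℕ) = 2) ∨
    ((i : ℕ) = 1 ∧ (j : ℕ) = 2) ∨ (2 ≤ (i : ℕ) ∧ (j : ℕ) = (i : ℕ) + 1))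

/-- The graph `L_n = G[3,3,n-4]`: triangles on `{0,1,2}` and `{n-3,n-2,n-1}`
joined by the path `2,3,…,n-3`. -/
def Lgraph (n : ℕ) : SimpleGraph (Fin n) :=
  SimpleGraph.fromRel (fun i j =>
    ((i : ℕ) = 0 ∧ (j : ℕ) = 1) ∨ ((i : ℕ) = 0 ∧ (j : ℕ) = 2) ∨
    ((i : ℕ) = 1 ∧ (j : ℕ) = 2) ∨
    (2 ≤ (i : ℕ) ∧ (j : ℕ) = (i : ℕ) + 1 ∧ (j : ℕ) ≤ n - 3) ∨
    ((i : ℕ) = n - 3 ∧ (j : ℕ) = n - 2) ∨ ((i : ℕ) = n - 3 ∧ (j : ℕ) = n - 1) ∨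
    ((i : ℕ) = n - 2 ∧ (j : ℕ) = n - 1))

/-- The graph `A_n`: `K₄` minus an edge on `{0,1,2,3}` (missing edge `0-3`,
so `3` has degree `2`) with the path `3,4,…,n-1` attached at `3`. -/
def Agraph (n : ℕ) : SimpleGraph (Fin n) :=
  SimpleGraph.fromRel (fun i j =>
    ((i : ℕ) = 0 ∧ (j : ℕ) = 1) ∨ ((i : ℕ) = 0 ∧ (j : ℕ) = 2) ∨
    ((i : ℕ) = 1 ∧ (j : ℕ) = 2) ∨ ((i : ℕ) = 1 ∧ (j : ℕ) = 3) ∨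
    ((i : ℕ) = 2 ∧ (j : ℕ) = 3) ∨ (3 ≤ (i : ℕ) ∧ (j : ℕ) = (i : ℕ) + 1))

/-- The graph `R_n`: vertex `0 = w` adjacent to all other vertices, with extra
edges `1-2` and `3-4` forming two triangles through `w`; the remaining `n-5`
neighbours of `w` are leaves. -/
def Rgraph (n : ℕ) : SimpleGraph (Fin n) :=
  SimpleGraph.fromRel (fun i j =>
    ((i : ℕ) = 0 ∧ (j : ℕ) ≠ 0) ∨ ((i : ℕ) = 1 ∧ (j : ℕ) = 2) ∨
    ((i : ℕ) = 3 ∧ (j : ℕ) = 4))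

/-- The graph `B_n`: `K₄` minus an edge on `{0,1,2,3}` (missing edge `0-3`,
so `1` has degree `3`) with `n-4` pendant edges `1-4, 1-5, …, 1-(n-1)`
attached at the degree-3 vertex `1`. -/
def Bgraph (n : ℕ) : SimpleGraph (Fin n) :=
  SimpleGraph.fromRel (fun i j =>
    ((i : ℕ) = 0 ∧ (j : ℕ) = 1) ∨ ((i : ℕ) = 0 ∧ (j : ℕ) = 2) ∨
    ((i : ℕ) = 1 ∧ (j : ℕ) = 2) ∨ ((i : ℕ) = 1 ∧ (j : ℕ) = 3) ∨
    ((i : ℕ) = 2 ∧ (j : ℕ) = 3) ∨ ((i : ℕ) = 1 ∧ 4 ≤ (j : ℕ)))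
lemma card_mem_subsets {V : Type*} [Fintype V] [DecidableEq V] (v : V) :
    Nat.card {s : Finset V // v ∈ s} = 2 ^ (Fintype.card V - 1) := by
  rw [Nat.card_eq_fintype_card, Fintype.card_subtype]
  have h1 : (Finset.univ.filter (fun s : Finset V => v ∈ s)).card
      = ((Finset.univ.erase v).powerset).card := by
    apply Finset.card_bij (fun s _ => s.erase v)
    · intro s hs
      simp only [Finset.mem_powerset]
      intro x hx
      simp only [Finset.mem_erase] at hx ⊢
      exact ⟨hx.1, Finset.mem_univ x⟩
    · intro s hs t ht h
      simp only [Finset.mem_filter] at hs ht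
      have := congrArg (insert v) h
      rwa [Finset.insert_erase hs.2, Finset.insert_erase ht.2] at this
    · intro t ht
      simp only [Finset.mem_powerset] at ht
      have hv : v ∉ t := fun hv => (Finset.mem_erase.mp (ht hv)).1 rfl
      exact ⟨insert v t, by simp, Finset.erase_insert hv⟩
  rw [h1, Finset.card_powerset, Finset.card_erase_of_mem (Finset.mem_univ v),
    Finset.card_univ]

lemma adj_of_pair_connected {V : Type*} (T : SimpleGraph V) {v w : V} (hvw : w ≠ v)
    {s : Set V} (hv : v ∈ s) (hw : w ∈ s) (hs : ∀ x ∈ s, x = v ∨ x = w)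
    (h : (T.induce s).Connected) : T.Adj v w := by
  obtain ⟨p⟩ := h.preconnected ⟨v, hv⟩ ⟨w, hw⟩
  have hne : (⟨v, hv⟩ : s) ≠ ⟨w, hw⟩ := fun h => hvw (congrArg Subtype.val h).symm
  have hnil : ¬ p.Nil := SimpleGraph.Walk.not_nil_of_ne hne
  have hadj : T.Adj v (((p.getVert 1) : s) : V) := p.adj_snd hnil
  rcases hs (p.getVert 1) ((p.getVert 1)).2 with hc | hc
  · exact absurd (hc ▸ hadj) T.irrefl
  · exact hc ▸ hadj

lemma star_connected {V : Type*} (T : SimpleGraph V) {v : V}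
    (hstar : ∀ w : V, w ≠ v → T.Adj v w) (s : Finset V) (hv : v ∈ s) :
    (T.induce (↑s : Set V)).Connected := by
  rw [SimpleGraph.connected_iff]
  have key : ∀ a : (↑s : Set V), (T.induce ↑s).Reachable a ⟨v, hv⟩ := by
    intro a
    by_cases h : (a : V) = v
    · have : a = ⟨v, hv⟩ := Subtype.ext h
      rw [this]
    · exact SimpleGraph.Adj.reachable (by exact (hstar a h).symm)
  exact ⟨fun a b => (key a).trans (key b).symm, ⟨⟨v, hv⟩⟩⟩


/-- In a tree on `n` vertices, a vertex `v` lies in at most `2^(n-1)` connected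
sets, with equality iff the tree is a star with center `v`. -/
theorem numConnSetsAt_le_of_tree
    {V : Type*} [Fintype V] (n : ℕ) (hn : Fintype.card V = n)
    (T : SimpleGraph V) (hT : T.IsTree) (v : V) :
    numConnSetsAt T v ≤ 2 ^ (n - 1) ∧
      (numConnSetsAt T v = 2 ^ (n - 1) ↔ ∀ w : V, w ≠ v → T.Adj v w) := by
  classical
  subst hn
  have hcard := card_mem_subsets (V := V) v
  let f : {s : Finset V // v ∈ s ∧ (T.induce (↑s : Set V)).Connected} → {s : Finset V // v ∈ s} :=
    fun s => ⟨s.1, s.2.1⟩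
  have hinj : Function.Injective f := fun a b h => Subtype.ext (congrArg (fun x : {s : Finset V // v ∈ s} => x.1) h)
  have hle : numConnSetsAt T v ≤ 2 ^ (Fintype.card V - 1) := by
    rw [numConnSetsAt, ← hcard]
    exact Nat.card_le_card_of_injective f hinj
  refine ⟨hle, ?_, ?_⟩
  · intro heq w hw
    rw [numConnSetsAt] at heq
    have : Fintype {s : Finset V // v ∈ s ∧ (T.induce (↑s : Set V)).Connected} :=
      Fintype.ofFinite _
    have hbij : Function.Bijective f := by
      rw [Fintype.bijective_iff_injective_and_card]
      refine ⟨hinj, ?_⟩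
      rw [← Nat.card_eq_fintype_card, ← Nat.card_eq_fintype_card, hcard, heq]
    obtain ⟨s', hs'⟩ := hbij.2 ⟨{v, w}, Finset.mem_insert_self v _⟩
    have hval : s'.1 = ({v, w} : Finset V) := congrArg Subtype.val hs'
    have hconn : (T.induce (↑({v, w} : Finset V) : Set V)).Connected := hval ▸ s'.2.2
    refine adj_of_pair_connected T hw (by simp) (by simp) ?_ hconn
    intro x hx
    simpa using hx
  · intro hstar
    rw [numConnSetsAt, ← hcard]
    refine Nat.card_congr (Equiv.subtypeEquivRight fun s => ?_)
    exact ⟨fun h => h.1, fun h => ⟨h, star_connected T hstar s h⟩⟩
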